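/- arXiv:1808.10013 — 2 statements merged into one kernel-verified Lean document; each statement's English description precedes it below -/
import Mathlib

section
/- Let f = f(X) be a score, f^B = E[Y | X, A], and a be a value of the discrete attribute A with Pr[A = a] > 0. Define the per-group calibration gap cal_f(a; A) = E[|f - E[Y | f, A]| given A = a]. Then cal_f(a; A) ≤ sqrt(E[(f - f^B)^2] / Pr[A = a]). -/
/-!
Write `g = E[Y | f, A]`. Since `σ(f, A) ⊆ σ(X, A)` and `f` is `σ(f, A)`-measurable, the tower
property gives `f - g = E[f - f^B | f, A]`, so the `L²` contraction of conditional expectation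
yields `E[(f - g)²] ≤ E[(f - f^B)²]`. Conditioning on `{A = a}` multiplies the expectation of a
nonnegative function by at most `1 / Pr[A = a]`, and Jensen's inequality bounds the conditional
`L¹` norm of `f - g` by its conditional `L²` norm.
-/

open MeasureTheory ProbabilityTheory

section
variable {Ω : Type*} {m m' m₀ : MeasurableSpace Ω} {μ : Measure Ω}

lemma integral_sq_condExp_le [IsFiniteMeasure μ] (hm : m ≤ m₀) {X : Ω → ℝ} (hX : MemLp X 2 μ) :
    ∫ ω, (μ[X | m]) ω ^ 2 ∂μ ≤ ∫ ω, X ω ^ 2 ∂μ := by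
  have hJensen : μ[X | m] ^ 2 ≤ᵐ[μ] μ[X ^ 2 | m] := by
    have hvar : 0 ≤ᵐ[μ] Var[X; μ | m] := condExp_nonneg (.of_forall fun ω => sq_nonneg _)
    filter_upwards [condVar_ae_eq_condExp_sq_sub_sq_condExp hm hX, hvar] with ω hω h0
    simp only [Pi.sub_apply, Pi.zero_apply] at hω h0
    linarith
  calc ∫ ω, (μ[X | m]) ω ^ 2 ∂μ ≤ ∫ ω, (μ[X ^ 2 | m]) ω ∂μ :=
        integral_mono_ae (hX.condExp one_le_two).integrable_sq integrable_condExp hJensen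
    _ = ∫ ω, X ω ^ 2 ∂μ := integral_condExp hm

lemma integral_sq_sub_condExp_le_of_le [IsFiniteMeasure μ] (hmm' : m ≤ m') (hm' : m' ≤ m₀)
    {Z Y : Ω → ℝ} (hZm : StronglyMeasurable[m] Z) (hZ : MemLp Z 2 μ) (hY : MemLp Y 2 μ) :
    ∫ ω, (Z ω - (μ[Y | m]) ω) ^ 2 ∂μ ≤ ∫ ω, (Z ω - (μ[Y | m']) ω) ^ 2 ∂μ := by
  have hproj : Z - μ[Y | m] =ᵐ[μ] μ[Z - μ[Y | m'] | m] := by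
    have hsub := condExp_sub (m := m) (hZ.integrable one_le_two)
      (integrable_condExp (m := m') (f := Y))
    rw [condExp_of_stronglyMeasurable (hmm'.trans hm') hZm (hZ.integrable one_le_two)] at hsub
    filter_upwards [hsub, condExp_condExp_of_le (μ := μ) (f := Y) hmm' hm'] with ω hsub htower
    simp only [hsub, Pi.sub_apply, htower]
  calc ∫ ω, (Z ω - (μ[Y | m]) ω) ^ 2 ∂μ = ∫ ω, (μ[Z - μ[Y | m'] | m]) ω ^ 2 ∂μ :=
        integral_congr_ae (hproj.mono fun ω hω => by simp only [← hω, Pi.sub_apply])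
    _ ≤ _ := integral_sq_condExp_le (hmm'.trans hm') (hZ.sub (hY.condExp one_le_two))

lemma integral_abs_le_sqrt_integral_sq [IsProbabilityMeasure μ] {X : Ω → ℝ} (hX : MemLp X 2 μ) :
    ∫ ω, |X ω| ∂μ ≤ Real.sqrt (∫ ω, X ω ^ 2 ∂μ) := by
  have h := variance_eq_sub hX.abs ▸ variance_nonneg (fun ω => |X ω|) μ
  simp only [Pi.pow_apply, Pi.abs_apply, sq_abs, sub_nonneg] at h
  exact Real.le_sqrt_of_sq_le h

lemma integral_cond_le_integral_div {s : Set Ω} {u : Ω → ℝ} (hu : Integrable u μ)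
    (hu0 : 0 ≤ᵐ[μ] u) : ∫ ω, u ω ∂μ[|s] ≤ (∫ ω, u ω ∂μ) / (μ s).toReal := by
  rw [ProbabilityTheory.cond, integral_smul_measure, ENNReal.toReal_inv, smul_eq_mul,
    div_eq_inv_mul]
  exact mul_le_mul_of_nonneg_left (setIntegral_le_integral hu hu0) (by positivity)

end

theorem per_group_calibration_gap_le_l2_general
    {Ω 𝒳 𝒜 : Type*} [MeasurableSpace Ω] [MeasurableSpace 𝒳] [MeasurableSpace 𝒜]
    (μ : Measure Ω) [IsProbabilityMeasure μ]
    (X : Ω → 𝒳) (A : Ω → 𝒜) (Y : Ω → ℝ) (f : 𝒳 → ℝ) (a : 𝒜)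
    (hX : Measurable X) (hA : Measurable A) (hY : Measurable Y) (hf : Measurable f)
    (hY01 : ∀ ω, Y ω = 0 ∨ Y ω = 1)
    (hf01 : ∀ x, f x ∈ Set.Icc (0 : ℝ) 1)
    (ha : 0 < (μ (A ⁻¹' {a})).toReal)
    (fB : Ω → ℝ)
    (hfB : fB = μ[Y | MeasurableSpace.comap (fun ω => (X ω, A ω)) inferInstance]) :
    ∫ ω, |f (X ω) -
          (μ[Y | MeasurableSpace.comap (fun ω => (f (X ω), A ω)) inferInstance]) ω|
        ∂(μ[|A ⁻¹' {a}]) ≤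
      Real.sqrt ((∫ ω, (f (X ω) - fB ω) ^ 2 ∂μ) / (μ (A ⁻¹' {a})).toReal) := by
  subst hfB
  have hFeat := (hX.prodMk hA).comap_le
  have hScoreFeat : MeasurableSpace.comap (fun ω => (f (X ω), A ω)) inferInstance ≤
      MeasurableSpace.comap (fun ω => (X ω, A ω)) inferInstance :=
    MeasurableSpace.comap_le_comap_of_eq_comp _ ((hf.comp measurable_fst).prodMk measurable_snd) rfl
  set mScore := MeasurableSpace.comap (fun ω => (f (X ω), A ω)) inferInstance
  have hfScore : StronglyMeasurable[mScore] (fun ω => f (X ω)) :=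
    (measurable_fst.comp (comap_measurable _)).stronglyMeasurable
  have hYL2 : MemLp Y 2 μ := MemLp.of_bound hY.aestronglyMeasurable 1
    (.of_forall fun ω => by rcases hY01 ω with h | h <;> simp [h])
  have hfL2 : MemLp (fun ω => f (X ω)) 2 μ := MemLp.of_bound (hf.comp hX).aestronglyMeasurable 1
    (.of_forall fun ω => abs_le.2 ⟨by linarith [(hf01 (X ω)).1], (hf01 (X ω)).2⟩)
  have hgap : MemLp (fun ω => f (X ω) - (μ[Y | mScore]) ω) 2 μ := hfL2.sub (hYL2.condExp one_le_two)
  have hμa : μ (A ⁻¹' {a}) ≠ 0 := fun h => by simp [h] at ha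
  have := cond_isProbabilityMeasure (s := A ⁻¹' {a}) hμa
  calc _ ≤ Real.sqrt (∫ ω, (f (X ω) - (μ[Y | mScore]) ω) ^ 2 ∂(μ[|A ⁻¹' {a}])) :=
        integral_abs_le_sqrt_integral_sq ((hgap.restrict _).smul_measure (ENNReal.inv_ne_top.2 hμa))
    _ ≤ Real.sqrt ((∫ ω, (f (X ω) - (μ[Y | mScore]) ω) ^ 2 ∂μ) / (μ (A ⁻¹' {a})).toReal) :=
        Real.sqrt_le_sqrt <| integral_cond_le_integral_div hgap.integrable_sq
          (.of_forall fun _ => sq_nonneg _)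
    _ ≤ _ := Real.sqrt_le_sqrt <| div_le_div_of_nonneg_right
        (integral_sq_sub_condExp_le_of_le hScoreFeat hFeat hfScore hfL2 hYL2) ha.le

/-- Per-group calibration gap bound: for a group a with Pr[A = a] > 0,
cal_f(a; A) = E[|f - E[Y|f,A]| ∣ A = a] ≤ √(E[(f - f^B)²] / Pr[A = a]). -/
theorem per_group_calibration_gap_le_l2
    {Ω 𝒳 𝒜 : Type*} [MeasurableSpace Ω] [MeasurableSpace 𝒳] [MeasurableSpace 𝒜]
    [MeasurableSingletonClass 𝒜]
    (μ : Measure Ω) [IsProbabilityMeasure μ]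
    (X : Ω → 𝒳) (A : Ω → 𝒜) (Y : Ω → ℝ) (f : 𝒳 → ℝ) (a : 𝒜)
    (hX : Measurable X) (hA : Measurable A) (hY : Measurable Y) (hf : Measurable f)
    (hY01 : ∀ ω, Y ω = 0 ∨ Y ω = 1)
    (hf01 : ∀ x, f x ∈ Set.Icc (0 : ℝ) 1)
    (ha : 0 < (μ (A ⁻¹' {a})).toReal)
    (fB : Ω → ℝ)
    (hfB : fB = μ[Y | MeasurableSpace.comap (fun ω => (X ω, A ω)) inferInstance]) :
    ∫ ω, |f (X ω) -
          (μ[Y | MeasurableSpace.comap (fun ω => (f (X ω), A ω)) inferInstance]) ω|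
        ∂(μ[|A ⁻¹' {a}]) ≤
      Real.sqrt ((∫ ω, (f (X ω) - fB ω) ^ 2 ∂μ) / (μ (A ⁻¹' {a})).toReal) :=
  per_group_calibration_gap_le_l2_general μ X A Y f a hX hA hY hf hY01 hf01 ha fB hfB
end

section
/- Let θ₁, θ₂ ∈ S¹ and let D_θ denote the distribution on S¹ × {0,1} where X is uniform on S¹ and Y | X ∼ Bernoulli(1/2 + ⟨θ, X⟩/4). Then the KL divergence between n i.i.d. samples satisfies KL(D_{θ₁}^⊗n, D_{θ₂}^⊗n) ≤ (n/12) · ‖θ₁ - θ₂‖₂². -/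
/-! On the circle both Bernoulli parameters lie in `[1/4, 3/4]`, where `s (1 - s) ≥ 3/16`, so
pointwise `KL(Bern p₁, Bern p₂) ≤ (8/3) (p₁ - p₂)²`. As `p₁ - p₂ = ⟨θ₁ - θ₂, X⟩ / 4` and
`⟨v, X⟩²` averages to `‖v‖² / 2` over the circle, the averaged divergence is at most
`(8/3) (1/16) (1/2) ‖θ₁ - θ₂‖² = ‖θ₁ - θ₂‖² / 12`, and the `n` samples contribute `n` times this. -/

open Real Set intervalIntegral

noncomputable def bernoulliKL (p q : ℝ) : ℝ :=
  p * log (p / q) + (1 - p) * log ((1 - p) / (1 - q))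

theorem bernoulliKL_le_sq_div {p q m : ℝ} (hm : 0 < m) (h : ∀ s ∈ uIcc p q, m ≤ s * (1 - s)) :
    bernoulliKL p q ≤ (p - q) ^ 2 / (2 * m) := by
  have hs : ∀ s ∈ uIcc p q, 0 < s ∧ 0 < 1 - s := fun s hs => by
    have := h s hs
    constructor <;> nlinarith
  -- `G q - G p = KL(p, q) - (p - q)² / (2m)`, and the sign of `G'` makes `G` peak at `s = p`.
  set G : ℝ → ℝ := fun s => -(p * log s) - (1 - p) * log (1 - s) - (s - p) ^ 2 / (2 * m)
  have hG : ∀ s ∈ uIcc p q, HasDerivAt G ((s - p) * (1 / (s * (1 - s)) - 1 / m)) s := by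
    intro s hs'
    obtain ⟨hs₀, hs₁⟩ := hs s hs'
    have hlog : HasDerivAt (fun y => log y) s⁻¹ s := hasDerivAt_log hs₀.ne'
    have hlog_one_sub : HasDerivAt (fun y => log (1 - y)) (-1 / (1 - s)) s := by
      simpa using ((hasDerivAt_id s).const_sub 1).log hs₁.ne'
    have hsq : HasDerivAt (fun y => (y - p) ^ 2 / (2 * m)) (2 * (s - p) / (2 * m)) s := by
      simpa using (((hasDerivAt_id s).sub_const p).pow 2).div_const (2 * m)
    refine ((hlog.const_mul p).neg.sub (hlog_one_sub.const_mul (1 - p))).sub hsq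
      |>.congr_deriv ?_
    field_simp
    ring
  have hG_deriv : ∀ s ∈ uIcc p q, 1 / (s * (1 - s)) - 1 / m ≤ 0 := fun s hs' => by
    rw [sub_nonpos]
    exact one_div_le_one_div_of_le hm (h s hs')
  have hG_cont : ContinuousOn G (uIcc p q) := fun s hs' =>
    (hG s hs').continuousAt.continuousWithinAt
  have hGqp : G q ≤ G p := by
    rcases le_total p q with hpq | hqp
    · refine antitoneOn_of_hasDerivWithinAt_nonpos (convex_uIcc p q) hG_cont
        (fun s hs' => (hG s (interior_subset hs')).hasDerivWithinAt) (fun s hs' => ?_)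
        left_mem_uIcc right_mem_uIcc hpq
      rw [uIcc_of_le hpq, interior_Icc] at hs'
      exact mul_nonpos_of_nonneg_of_nonpos (by linarith [hs'.1])
        (hG_deriv s (Ioo_subset_Icc_self.trans Icc_subset_uIcc hs'))
    · refine monotoneOn_of_hasDerivWithinAt_nonneg (convex_uIcc p q) hG_cont
        (fun s hs' => (hG s (interior_subset hs')).hasDerivWithinAt) (fun s hs' => ?_)
        right_mem_uIcc left_mem_uIcc hqp
      rw [uIcc_of_ge hqp, interior_Icc] at hs'
      exact mul_nonneg_of_nonpos_of_nonpos (by linarith [hs'.2])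
        (hG_deriv s (Ioo_subset_Icc_self.trans Icc_subset_uIcc' hs'))
  obtain ⟨hp₀, hp₁⟩ := hs p left_mem_uIcc
  obtain ⟨hq₀, hq₁⟩ := hs q right_mem_uIcc
  have hKL : bernoulliKL p q = G q - G p + (p - q) ^ 2 / (2 * m) := by
    rw [bernoulliKL, log_div hp₀.ne' hq₀.ne', log_div hp₁.ne' hq₁.ne']
    simp only [G]
    ring
  linarith

theorem bernoulliKL_le_of_mem_Icc {p q : ℝ} (hp : p ∈ Icc (1 / 4 : ℝ) (3 / 4))
    (hq : q ∈ Icc (1 / 4 : ℝ) (3 / 4)) : bernoulliKL p q ≤ 8 / 3 * (p - q) ^ 2 := by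
  have h : ∀ s ∈ uIcc p q, 3 / 16 ≤ s * (1 - s) := fun s hs => by
    have := uIcc_subset_Icc hp hq hs
    nlinarith [this.1, this.2]
  calc bernoulliKL p q ≤ (p - q) ^ 2 / (2 * (3 / 16)) := bernoulliKL_le_sq_div (by norm_num) h
    _ = 8 / 3 * (p - q) ^ 2 := by ring

theorem integral_mul_cos_add_mul_sin_sq (a b : ℝ) :
    ∫ t in (0 : ℝ)..2 * π, (a * cos t + b * sin t) ^ 2 = π * (a ^ 2 + b ^ 2) := by
  have hexp : ∀ t, (a * cos t + b * sin t) ^ 2 =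
      a ^ 2 * cos t ^ 2 + 2 * a * b * (sin t * cos t) + b ^ 2 * sin t ^ 2 := fun t => by ring
  simp_rw [hexp]
  rw [integral_add, integral_add, integral_const_mul, integral_const_mul, integral_const_mul,
    integral_cos_sq, integral_sin_sq, integral_sin_mul_cos₁]
  · simp only [sin_two_pi, cos_two_pi, sin_zero, cos_zero]
    ring
  all_goals exact Continuous.intervalIntegrable (by fun_prop) _ _

theorem half_add_mul_cos_add_mul_sin_div_four_mem_Icc {a b : ℝ} (h : a ^ 2 + b ^ 2 = 1) (t : ℝ) :
    1 / 2 + (a * cos t + b * sin t) / 4 ∈ Icc (1 / 4 : ℝ) (3 / 4) := by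
  have hsq : (a * cos t + b * sin t) ^ 2 ≤ 1 := by
    nlinarith [sq_nonneg (a * sin t - b * cos t), sin_sq_add_cos_sq t]
  obtain ⟨hlower, hupper⟩ := abs_le.mp (sq_le_one_iff_abs_le_one _ |>.mp hsq)
  constructor <;> linarith

theorem Continuous.bernoulliKL {X : Type*} [TopologicalSpace X] {P Q : X → ℝ}
    (hP : Continuous P) (hQ : Continuous Q) (hP₀₁ : ∀ x, P x ∈ Ioo 0 1)
    (hQ₀₁ : ∀ x, Q x ∈ Ioo 0 1) :
    Continuous fun x => bernoulliKL (P x) (Q x) := by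
  have hpos x : 0 < P x ∧ 0 < 1 - P x ∧ 0 < Q x ∧ 0 < 1 - Q x :=
    ⟨(hP₀₁ x).1, sub_pos.2 (hP₀₁ x).2, (hQ₀₁ x).1, sub_pos.2 (hQ₀₁ x).2⟩
  unfold _root_.bernoulliKL
  fun_prop (disch := intro x; obtain ⟨_, _, _, _⟩ := hpos x; positivity)

/-- Lemma B.2 (KL bound for n i.i.d. samples): for unit vectors θ₁, θ₂ and the
distribution D_θ on S¹ × {0,1} where X is uniform on the circle and
Y | X ∼ Bernoulli(1/2 + ⟨θ, X⟩/4), the KL divergence between n i.i.d. samples —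
which by tensorization and the chain rule equals
n · E_{X}[KL(Bern(p_{θ₁}(X)) ‖ Bern(p_{θ₂}(X)))] — is at most (n/12)‖θ₁ - θ₂‖₂².
Here KL(Bern(p) ‖ Bern(q)) = p log(p/q) + (1-p) log((1-p)/(1-q)) and the
expectation over X is the uniform angle average over [0, 2π]. -/
theorem kl_bound_n_samples
    (n : ℕ) (θ₁ θ₂ : ℝ × ℝ)
    (hθ₁ : θ₁.1 ^ 2 + θ₁.2 ^ 2 = 1) (hθ₂ : θ₂.1 ^ 2 + θ₂.2 ^ 2 = 1)
    (p₁ p₂ : ℝ → ℝ)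
    (hp₁ : ∀ t, p₁ t = 1 / 2 + (θ₁.1 * cos t + θ₁.2 * sin t) / 4)
    (hp₂ : ∀ t, p₂ t = 1 / 2 + (θ₂.1 * cos t + θ₂.2 * sin t) / 4) :
    (n : ℝ) * ((1 / (2 * π)) * ∫ t in (0 : ℝ)..(2 * π),
        (p₁ t * Real.log (p₁ t / p₂ t) +
         (1 - p₁ t) * Real.log ((1 - p₁ t) / (1 - p₂ t)))) ≤
      ((n : ℝ) / 12) * ((θ₁.1 - θ₂.1) ^ 2 + (θ₁.2 - θ₂.2) ^ 2) := by
  have hP₁ t : p₁ t ∈ Icc (1 / 4 : ℝ) (3 / 4) :=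
    hp₁ t ▸ half_add_mul_cos_add_mul_sin_div_four_mem_Icc hθ₁ t
  have hP₂ t : p₂ t ∈ Icc (1 / 4 : ℝ) (3 / 4) :=
    hp₂ t ▸ half_add_mul_cos_add_mul_sin_div_four_mem_Icc hθ₂ t
  have hcont₁ : Continuous p₁ := by rw [funext hp₁]; fun_prop
  have hcont₂ : Continuous p₂ := by rw [funext hp₂]; fun_prop
  have hKL_cont : Continuous fun t => bernoulliKL (p₁ t) (p₂ t) :=
    hcont₁.bernoulliKL hcont₂ (fun t => Icc_subset_Ioo (by norm_num) (by norm_num) (hP₁ t))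
      (fun t => Icc_subset_Ioo (by norm_num) (by norm_num) (hP₂ t))
  have hbound : ∫ t in (0 : ℝ)..2 * π, bernoulliKL (p₁ t) (p₂ t) ≤
      π / 6 * ((θ₁.1 - θ₂.1) ^ 2 + (θ₁.2 - θ₂.2) ^ 2) :=
    calc ∫ t in (0 : ℝ)..2 * π, bernoulliKL (p₁ t) (p₂ t)
        ≤ ∫ t in (0 : ℝ)..2 * π, 8 / 3 * (p₁ t - p₂ t) ^ 2 :=
          integral_mono_on (by positivity) (hKL_cont.intervalIntegrable _ _)
            (Continuous.intervalIntegrable (by fun_prop) _ _)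
            fun t _ => bernoulliKL_le_of_mem_Icc (hP₁ t) (hP₂ t)
      _ = ∫ t in (0 : ℝ)..2 * π,
            1 / 6 * ((θ₁.1 - θ₂.1) * cos t + (θ₁.2 - θ₂.2) * sin t) ^ 2 :=
          integral_congr fun t _ => by simp only [hp₁, hp₂]; ring
      _ = π / 6 * ((θ₁.1 - θ₂.1) ^ 2 + (θ₁.2 - θ₂.2) ^ 2) := by
          rw [integral_const_mul, integral_mul_cos_add_mul_sin_sq]; ring
  calc (n : ℝ) * (1 / (2 * π) * ∫ t in (0 : ℝ)..2 * π, bernoulliKL (p₁ t) (p₂ t))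
      ≤ n * (1 / (2 * π) * (π / 6 * ((θ₁.1 - θ₂.1) ^ 2 + (θ₁.2 - θ₂.2) ^ 2))) := by
        gcongr
    _ = n / 12 * ((θ₁.1 - θ₂.1) ^ 2 + (θ₁.2 - θ₂.2) ^ 2) := by
        field_simp
        ring
end
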